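/- Let Γ be a group with a left-invariant, strongly hyperbolic metric (i.e., e^{-⟨x,y⟩} ≤ e^{-⟨x,z⟩} + e^{-⟨z,y⟩} for all x,y,z, with Gromov product based at the identity). Then for all g,x,y ∈ Γ, |⟨g,x⟩ − ⟨g,y⟩| ≤ e^{|g|} · e^{-⟨x,y⟩}. -/
import Mathlib


/-- `|x| = d(1,x)`. -/
noncomputable def nrm {Γ : Type*} [Group Γ] [MetricSpace Γ] (x : Γ) : ℝ := dist (1 : Γ) x

/-- The Gromov product based at the identity. -/
noncomputable def gp {Γ : Type*} [Group Γ] [MetricSpace Γ] (x y : Γ) : ℝ :=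
  (nrm x + nrm y - dist x y) / 2

lemma gp_symm {Γ : Type*} [Group Γ] [MetricSpace Γ] (x y : Γ) : gp x y = gp y x := by
  simp only [gp, dist_comm]; ring

lemma gp_le_nrm {Γ : Type*} [Group Γ] [MetricSpace Γ] (g x : Γ) : gp g x ≤ nrm g := by
  have h := dist_triangle (1 : Γ) g x
  simp only [gp, nrm] at *
  linarith

lemma mvt_aux (a b M c : ℝ) (hb : b ≤ M) (hab : a ≤ b) (hc : 0 ≤ c)
    (h : Real.exp (-a) ≤ Real.exp (-b) + c) : b - a ≤ Real.exp M * c := by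
  have h1 : Real.exp (-b) * (b - a) ≤ Real.exp (-a) - Real.exp (-b) := by
    have he : Real.exp (-a) = Real.exp (-b) * Real.exp (b - a) := by
      rw [← Real.exp_add]; ring_nf
    have h2 := Real.add_one_le_exp (b - a)
    nlinarith [Real.exp_pos (-b)]
  have h3 : Real.exp (-b) * (b - a) ≤ c := by linarith
  have h4 : Real.exp b ≤ Real.exp M := Real.exp_le_exp.mpr hb
  have h5 : Real.exp b * (Real.exp (-b) * (b - a)) ≤ Real.exp b * c :=
    mul_le_mul_of_nonneg_left h3 (Real.exp_pos b).le
  rw [← mul_assoc, ← Real.exp_add] at h5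
  simp at h5
  nlinarith [Real.exp_pos b]

/-- For a left-invariant strongly hyperbolic metric on a group,
`|⟨g,x⟩ − ⟨g,y⟩| ≤ e^{|g|} e^{−⟨x,y⟩}`. -/
theorem haagerup_cocycle_bound {Γ : Type*} [Group Γ] [MetricSpace Γ]
    (hinv : ∀ g x y : Γ, dist (g * x) (g * y) = dist x y)
    (hSH : ∀ x y z : Γ,
      Real.exp (-(gp x y)) ≤ Real.exp (-(gp x z)) + Real.exp (-(gp z y))) :
    ∀ g x y : Γ, |gp g x - gp g y| ≤ Real.exp (nrm g) * Real.exp (-(gp x y)) := by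
  intro g x y
  have hc : (0:ℝ) ≤ Real.exp (-(gp x y)) := (Real.exp_pos _).le
  rcases le_total (gp g x) (gp g y) with hle | hle
  · rw [abs_sub_comm, abs_of_nonneg (by linarith)]
    have h := hSH g x y
    rw [gp_symm y x] at h
    exact mvt_aux _ _ _ _ (gp_le_nrm g y) hle hc h
  · rw [abs_of_nonneg (by linarith)]
    have h := hSH g y x
    exact mvt_aux _ _ _ _ (gp_le_nrm g x) hle hc h
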